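/- For all Banach spaces E and F and every S ∈ L(E,F), one has (1/‖ρ_{E*}‖)·‖R(S)‖ ≤ ‖R(S*)‖ ≤ ‖ρ_{F*}‖·‖R(S)‖, where R(S*) ∈ L(F***/F*, E***/E*); in particular, since ‖ρ_{E*}‖ ≤ 2 and ‖ρ_{F*}‖ ≤ 2, it follows that ‖R(S)‖/2 ≤ ‖R(S*)‖ ≤ 2‖R(S)‖. -/

import Mathlib

open NormedSpace Metric Pointwise Filter

noncomputable section

/-- The topological dual of a seminormed space `E` (formerly `NormedSpace.Dual`). -/
abbrev Dual (𝕜 : Type*) [NontriviallyNormedField 𝕜] (E : Type*) [SeminormedAddCommGroup E]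
    [NormedSpace 𝕜 E] : Type _ :=
  E →L[𝕜] 𝕜

variable (𝕜 : Type*) [RCLike 𝕜]

/-- A Banach space over `𝕜`, bundled. -/
structure BanachPkg where
  carrier : Type
  [inst1 : NormedAddCommGroup carrier]
  [inst2 : NormedSpace 𝕜 carrier]
  [inst3 : CompleteSpace carrier]

attribute [instance] BanachPkg.inst1 BanachPkg.inst2 BanachPkg.inst3

variable {𝕜}

section Defs

variable {E F : Type*} [SeminormedAddCommGroup E] [NormedSpace 𝕜 E]
  [SeminormedAddCommGroup F] [NormedSpace 𝕜 F]

/-- A continuous linear operator is weakly compact if the image of the closed unit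
ball is relatively compact in the weak topology. -/
def WCompact (T : E →L[𝕜] F) : Prop :=
  IsCompact (closure ((toWeakSpace 𝕜 F) '' (T '' closedBall 0 1)))

/-- The Banach-space adjoint of a continuous linear operator. -/
def dualOp (S : E →L[𝕜] F) : Dual 𝕜 F →L[𝕜] Dual 𝕜 E :=
  (ContinuousLinearMap.compL 𝕜 E F 𝕜).flip S

@[simp] theorem dualOp_apply (S : E →L[𝕜] F) (f : Dual 𝕜 F) (x : E) :
    dualOp S f x = f (S x) := rfl

/-- The second adjoint `S** : E** → F**`. -/
def bidualOp (S : E →L[𝕜] F) : Dual 𝕜 (Dual 𝕜 E) →L[𝕜] Dual 𝕜 (Dual 𝕜 F) :=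
  dualOp (dualOp S)

end Defs

/-- The bidual of a normed space. -/
abbrev Bidual (𝕜 : Type*) [RCLike 𝕜] (E : Type*) [SeminormedAddCommGroup E]
    [NormedSpace 𝕜 E] : Type _ :=
  Dual 𝕜 (Dual 𝕜 E)

/-- The quotient `E**/E` of the bidual by the canonical image of `E`. -/
abbrev BidualQuot (𝕜 : Type*) [RCLike 𝕜] (E : Type*) [NormedAddCommGroup E]
    [NormedSpace 𝕜 E] : Type _ :=
  Bidual 𝕜 E ⧸ (show @Submodule 𝕜 (Bidual 𝕜 E) _ AddCommGroup.toAddCommMonoid NormedSpace.toModule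
    from LinearMap.range (inclusionInDoubleDual 𝕜 E).toLinearMap)

section Defs3

variable {E F : Type*} [NormedAddCommGroup E] [NormedSpace 𝕜 E]
  [NormedAddCommGroup F] [NormedSpace 𝕜 F]

/-- `RS` is the operator `R(S) : E**/E → F**/F` induced by `S`, i.e. it satisfies
`R(S)(x** + E) = S** x** + F`  (`R(S) = 0` iff `S` is weakly compact). -/
def IsRRep (S : E →L[𝕜] F) (RS : BidualQuot 𝕜 E →L[𝕜] BidualQuot 𝕜 F) : Prop :=
  ∀ u : Bidual 𝕜 E,
    RS (Submodule.Quotient.mk u) = Submodule.Quotient.mk (bidualOp S u)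

end Defs3

variable (E : Type*) [NormedAddCommGroup E] [NormedSpace ℝ E]

/-- The canonical projection `π_{E*} : E*** → E***` onto (the canonical image of) `E*`,
sending `u` to `u|_E` regarded again as an element of `E***`. -/
def piStar : Dual ℝ (Bidual ℝ E) →L[ℝ] Dual ℝ (Bidual ℝ E) :=
  (inclusionInDoubleDual ℝ (Dual ℝ E)).comp (dualOp (inclusionInDoubleDual ℝ E))

/-- `ρ_{E*} = Id_{E***} - π_{E*}`. -/
def rhoStar : Dual ℝ (Bidual ℝ E) →L[ℝ] Dual ℝ (Bidual ℝ E) :=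
  ContinuousLinearMap.id ℝ _ - piStar E

variable {E}

/- Write `ι` for the canonical embeddings and `G^⊥ ⊆ G***` for the annihilator of `ι(G)`.
`ρ_{G*}` kills `ι(G*)` and maps `G***` into `G^⊥`, on which it is the identity. For `u ∈ F^⊥`,
`(S*** u)(x) = u(S** x)` only depends on `S** x + F = R(S)(x + E)`, so
`‖S*** u‖ ≤ ‖u‖ ‖R(S)‖`. Since `S***(π_{F*} v) ∈ ι(E*)`, we get
`R(S*)(v + F*) = S***(ρ_{F*} v) + E*`, whence `‖R(S*)‖ ≤ ‖ρ_{F*}‖ ‖R(S)‖`.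
Conversely, composing a norming functional of `R(S)(x + E)` with `F** → F**/F` gives
`w ∈ F^⊥` of norm `≤ 1`; then `u = S*** w ∈ E^⊥`, so `u = ρ_{E*} u` and
`‖R(S)(x + E)‖ = u(x) ≤ ‖u‖ ‖x + E‖ ≤ ‖ρ_{E*}‖ ‖R(S*)(w + F*)‖ ‖x + E‖`. -/

theorem ContinuousLinearMap.norm_apply_le_mul_norm_mk_of_le_ker {𝕜 M N : Type*}
    [NontriviallyNormedField 𝕜] [SeminormedAddCommGroup M] [NormedSpace 𝕜 M]
    [SeminormedAddCommGroup N] [NormedSpace 𝕜 N] (w : M →L[𝕜] N) {p : Submodule 𝕜 M}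
    (h : p ≤ w.ker) (y : M) :
    ‖w y‖ ≤ ‖w‖ * ‖(Submodule.Quotient.mk y : M ⧸ p)‖ := by
  let f := (w : M →+ N).mkNormedAddGroupHom ‖w‖ w.le_opNorm
  calc ‖w y‖ ≤ ‖f‖ * ‖(Submodule.Quotient.mk y : M ⧸ p)‖ :=
        QuotientAddGroup.norm_lift_apply_le (S := p.toAddSubgroup) f (fun x hx => h hx)
          (QuotientAddGroup.mk y)
    _ ≤ ‖w‖ * ‖(Submodule.Quotient.mk y : M ⧸ p)‖ := by
        gcongr
        exact AddMonoidHom.mkNormedAddGroupHom_norm_le _ (norm_nonneg _) _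

theorem exists_dual_vector_of_seminormed {𝕜 X : Type*} [RCLike 𝕜]
    [SeminormedAddCommGroup X] [NormedSpace 𝕜 X] (x : X) :
    ∃ g : X →L[𝕜] 𝕜, ‖g‖ ≤ 1 ∧ g x = ‖x‖ := by
  obtain ⟨g, hg, hgx⟩ := exists_dual_vector'' 𝕜 (SeparationQuotient.mk x)
  refine ⟨g.comp (SeparationQuotient.mkCLM 𝕜 X), ?_, by simpa using hgx⟩
  refine ContinuousLinearMap.opNorm_le_bound _ zero_le_one fun y => ?_
  simpa using g.le_of_opNorm_le hg (SeparationQuotient.mk y)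

section Adjoints

variable {𝕜 : Type*} [RCLike 𝕜] {E F : Type*} [SeminormedAddCommGroup E] [NormedSpace 𝕜 E]
  [SeminormedAddCommGroup F] [NormedSpace 𝕜 F]

theorem norm_dualOp_le (S : E →L[𝕜] F) : ‖dualOp S‖ ≤ ‖S‖ :=
  ContinuousLinearMap.opNorm_le_bound _ (norm_nonneg S) fun f =>
    (f.opNorm_comp_le S).trans_eq (mul_comm _ _)

theorem bidualOp_inclusionInDoubleDual (S : E →L[𝕜] F) (x : E) :
    bidualOp S (inclusionInDoubleDual 𝕜 E x) = inclusionInDoubleDual 𝕜 F (S x) :=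
  rfl

end Adjoints

section Rho

variable {G : Type*} [NormedAddCommGroup G] [NormedSpace ℝ G]

theorem norm_piStar_le : ‖piStar G‖ ≤ 1 := by
  have h₁ : ‖show Dual ℝ G →L[ℝ] Bidual ℝ (Dual ℝ G) from
      inclusionInDoubleDual ℝ (Dual ℝ G)‖ ≤ 1 :=
    inclusionInDoubleDual_norm_le ℝ _
  have h₂ : ‖dualOp (F := Bidual ℝ G) (inclusionInDoubleDual ℝ G)‖ ≤ 1 :=
    (norm_dualOp_le _).trans (inclusionInDoubleDual_norm_le ℝ G)
  exact (ContinuousLinearMap.opNorm_comp_le _ _).trans (mul_le_one₀ h₁ (norm_nonneg _) h₂)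

theorem norm_rhoStar_le : ‖rhoStar G‖ ≤ 2 :=
  calc ‖rhoStar G‖ ≤ ‖ContinuousLinearMap.id ℝ (Dual ℝ (Bidual ℝ G))‖ + ‖piStar G‖ :=
        norm_sub_le (ContinuousLinearMap.id ℝ _) (piStar G)
    _ ≤ 1 + 1 := add_le_add ContinuousLinearMap.norm_id_le norm_piStar_le
    _ = 2 := one_add_one_eq_two

theorem rhoStar_inclusionInDoubleDual (g : Dual ℝ G) :
    rhoStar G (inclusionInDoubleDual ℝ (Dual ℝ G) g) = 0 := by
  have hg : dualOp (inclusionInDoubleDual ℝ G) (inclusionInDoubleDual ℝ (Dual ℝ G) g) = g := rfl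
  simp [rhoStar, piStar, hg]

theorem rhoStar_apply_inclusionInDoubleDual (u : Dual ℝ (Bidual ℝ G)) (x : G) :
    rhoStar G u (inclusionInDoubleDual ℝ G x) = 0 := by
  simp [rhoStar, piStar, NormedSpace.dual_def]

theorem rhoStar_eq_self {u : Dual ℝ (Bidual ℝ G)}
    (hu : ∀ x, u (inclusionInDoubleDual ℝ G x) = 0) : rhoStar G u = u := by
  have : dualOp (inclusionInDoubleDual ℝ G) u = 0 := ContinuousLinearMap.ext hu
  simp [rhoStar, piStar, this]

theorem norm_rhoStar_apply_le (u : Dual ℝ (Bidual ℝ G)) :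
    ‖rhoStar G u‖ ≤ ‖rhoStar G‖ * ‖(Submodule.Quotient.mk u : BidualQuot ℝ (Dual ℝ G))‖ := by
  refine (rhoStar G).norm_apply_le_mul_norm_mk_of_le_ker ?_ u
  rintro _ ⟨g, rfl⟩
  exact rhoStar_inclusionInDoubleDual g

theorem norm_apply_le_of_annihilates {u : Dual ℝ (Bidual ℝ G)}
    (hu : ∀ x, u (inclusionInDoubleDual ℝ G x) = 0) (z : Bidual ℝ G) :
    ‖u z‖ ≤ ‖u‖ * ‖(Submodule.Quotient.mk z : BidualQuot ℝ G)‖ := by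
  refine u.norm_apply_le_mul_norm_mk_of_le_ker ?_ z
  rintro _ ⟨x, rfl⟩
  exact hu x

theorem mk_bidualOp_rhoStar {Y : Type*} [NormedAddCommGroup Y] [NormedSpace ℝ Y]
    (T : Dual ℝ G →L[ℝ] Y) (v : Dual ℝ (Bidual ℝ G)) :
    (Submodule.Quotient.mk (bidualOp T (rhoStar G v)) : BidualQuot ℝ Y) =
      Submodule.Quotient.mk (bidualOp T v) := by
  rw [eq_comm, Submodule.Quotient.eq, ← map_sub, rhoStar, sub_apply,
    ContinuousLinearMap.id_apply, sub_sub_cancel, piStar, ContinuousLinearMap.comp_apply,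
    bidualOp_inclusionInDoubleDual]
  exact ⟨_, rfl⟩

end Rho

namespace IsRRep

variable {E F : Type*} [NormedAddCommGroup E] [NormedSpace ℝ E]
  [NormedAddCommGroup F] [NormedSpace ℝ F] {S : E →L[ℝ] F}
  {RS : BidualQuot ℝ E →L[ℝ] BidualQuot ℝ F}
  {RSd : BidualQuot ℝ (Dual ℝ F) →L[ℝ] BidualQuot ℝ (Dual ℝ E)}

theorem norm_bidualOp_dualOp_le (hRS : IsRRep S RS) {u : Dual ℝ (Bidual ℝ F)}
    (hu : ∀ y, u (inclusionInDoubleDual ℝ F y) = 0) :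
    ‖bidualOp (dualOp S) u‖ ≤ ‖u‖ * ‖RS‖ := by
  refine ContinuousLinearMap.opNorm_le_bound _ (by positivity) fun x => ?_
  calc ‖u (bidualOp S x)‖
      ≤ ‖u‖ * ‖RS (Submodule.Quotient.mk x)‖ := by
        rw [hRS x]
        exact norm_apply_le_of_annihilates hu _
    _ ≤ ‖u‖ * (‖RS‖ * ‖x‖) := by
        gcongr
        exact RS.le_opNorm_of_le (Submodule.Quotient.norm_mk_le _ x)
    _ = ‖u‖ * ‖RS‖ * ‖x‖ := (mul_assoc _ _ _).symm

theorem norm_dual_le (hRS : IsRRep S RS) (hRSd : IsRRep (dualOp S) RSd) :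
    ‖RSd‖ ≤ ‖rhoStar F‖ * ‖RS‖ := by
  refine RSd.opNorm_le_bound (by positivity) fun q => ?_
  obtain ⟨v, rfl⟩ := Submodule.Quotient.mk_surjective _ q
  rw [hRSd v, ← mk_bidualOp_rhoStar]
  calc _ ≤ ‖bidualOp (dualOp S) (rhoStar F v)‖ := Submodule.Quotient.norm_mk_le _ _
    _ ≤ ‖rhoStar F v‖ * ‖RS‖ :=
        hRS.norm_bidualOp_dualOp_le (rhoStar_apply_inclusionInDoubleDual v)
    _ ≤ ‖rhoStar F‖ * ‖(Submodule.Quotient.mk v : BidualQuot ℝ (Dual ℝ F))‖ * ‖RS‖ := by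
        gcongr
        exact norm_rhoStar_apply_le v
    _ = _ := mul_right_comm _ _ _

theorem norm_le_of_dual (hRS : IsRRep S RS) (hRSd : IsRRep (dualOp S) RSd) :
    ‖RS‖ ≤ ‖rhoStar E‖ * ‖RSd‖ := by
  refine RS.opNorm_le_bound (by positivity) fun q => ?_
  obtain ⟨x, rfl⟩ := Submodule.Quotient.mk_surjective _ q
  obtain ⟨ψ, hψ, hψx⟩ :=
    exists_dual_vector_of_seminormed (𝕜 := ℝ) (RS (Submodule.Quotient.mk x))
  rw [RCLike.ofReal_real_eq_id, id_eq] at hψx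
  set w : Dual ℝ (Bidual ℝ F) := ψ.comp (Submodule.mkQL _)
  have hw : ‖w‖ ≤ 1 := ContinuousLinearMap.opNorm_le_bound _ zero_le_one fun z =>
    (ψ.le_of_opNorm_le hψ _).trans (by simpa using Submodule.Quotient.norm_mk_le _ z)
  have hw_ann (y : F) : w (inclusionInDoubleDual ℝ F y) = 0 := by
    have hy : (Submodule.Quotient.mk (inclusionInDoubleDual ℝ F y) : BidualQuot ℝ F) = 0 :=
      (Submodule.Quotient.mk_eq_zero _).mpr (LinearMap.mem_range_self _ y)
    exact (congrArg ψ hy).trans (map_zero ψ)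
  set u := bidualOp (dualOp S) w
  have hu_ann (y : E) : u (inclusionInDoubleDual ℝ E y) = 0 := hw_ann (S y)
  have hu : ‖u‖ ≤ ‖rhoStar E‖ * ‖RSd‖ := by
    rw [← rhoStar_eq_self hu_ann]
    refine (norm_rhoStar_apply_le u).trans (mul_le_mul_of_nonneg_left ?_ (norm_nonneg (rhoStar E)))
    rw [← hRSd w]
    exact RSd.le_of_opNorm_le_of_le le_rfl ((Submodule.Quotient.norm_mk_le _ w).trans hw)
      |>.trans_eq (mul_one _)
  calc ‖RS (Submodule.Quotient.mk x)‖ = u x := by rw [← hψx, hRS x]; rfl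
    _ ≤ ‖u‖ * ‖(Submodule.Quotient.mk x : BidualQuot ℝ E)‖ :=
        (le_abs_self _).trans (norm_apply_le_of_annihilates hu_ann x)
    _ ≤ _ := by gcongr

end IsRRep

theorem norm_RRep_dual_bounds_general
    {F : Type*} [NormedAddCommGroup F] [NormedSpace ℝ F]
    (S : E →L[ℝ] F)
    (RS : BidualQuot ℝ E →L[ℝ] BidualQuot ℝ F) (hRS : IsRRep S RS)
    (RSd : BidualQuot ℝ (Dual ℝ F) →L[ℝ] BidualQuot ℝ (Dual ℝ E))
    (hRSd : IsRRep (dualOp S) RSd) :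
    (1 / ‖rhoStar E‖) * ‖RS‖ ≤ ‖RSd‖ ∧ ‖RSd‖ ≤ ‖rhoStar F‖ * ‖RS‖ ∧
    ‖RS‖ / 2 ≤ ‖RSd‖ ∧ ‖RSd‖ ≤ 2 * ‖RS‖ := by
  have hRSd_le : ‖RSd‖ ≤ ‖rhoStar F‖ * ‖RS‖ := hRS.norm_dual_le hRSd
  have hRS_le : ‖RS‖ ≤ ‖rhoStar E‖ * ‖RSd‖ := hRS.norm_le_of_dual hRSd
  have hρE : ‖rhoStar E‖ ≤ 2 := norm_rhoStar_le
  have hρF : ‖rhoStar F‖ ≤ 2 := norm_rhoStar_le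
  refine ⟨?_, hRSd_le, ?_, ?_⟩
  · rw [one_div_mul_eq_div]
    exact div_le_of_le_mul₀ (norm_nonneg (rhoStar E)) (norm_nonneg RSd)
      (hRS_le.trans_eq (mul_comm _ _))
  · nlinarith [norm_nonneg RSd]
  · nlinarith [norm_nonneg RS]

/-- For all Banach spaces `E`, `F` and `S ∈ L(E,F)`:
`(1/‖ρ_{E*}‖)·‖R(S)‖ ≤ ‖R(S*)‖ ≤ ‖ρ_{F*}‖·‖R(S)‖`, and in particular
`‖R(S)‖/2 ≤ ‖R(S*)‖ ≤ 2·‖R(S)‖`. -/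
theorem norm_RRep_dual_bounds
    {F : Type*} [NormedAddCommGroup F] [NormedSpace ℝ F]
    [CompleteSpace E] [CompleteSpace F]
    (S : E →L[ℝ] F)
    (RS : BidualQuot ℝ E →L[ℝ] BidualQuot ℝ F) (hRS : IsRRep S RS)
    (RSd : BidualQuot ℝ (Dual ℝ F) →L[ℝ] BidualQuot ℝ (Dual ℝ E))
    (hRSd : IsRRep (dualOp S) RSd) :
    (1 / ‖rhoStar E‖) * ‖RS‖ ≤ ‖RSd‖ ∧ ‖RSd‖ ≤ ‖rhoStar F‖ * ‖RS‖ ∧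
    ‖RS‖ / 2 ≤ ‖RSd‖ ∧ ‖RSd‖ ≤ 2 * ‖RS‖ :=
  norm_RRep_dual_bounds_general S RS hRS RSd hRSd

end
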